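/- arXiv:2605.16853 — 4 statements merged into one kernel-verified Lean document; each statement's English description precedes it below -/
import Mathlib

section
/- If r : [0,ω] → ℝ is monotone nonincreasing and integrable, and p(x) = p(0) + x·r(x) − ∫₀ˣ r(t) dt, then for all x, γ ∈ [0,ω] we have p(x) − r(x)·x ≥ p(γ) − r(γ)·x; that is, truthful reporting maximizes the expected utility û(x, x') = p(x') − r(x')·x. -/
open MeasureTheory intervalIntegral

/-- If r is monotone nonincreasing and integrable on [0,ω] and the payment is
p(x) = p(0) + x·r(x) − ∫₀ˣ r(t) dt, then truthful reporting maximizes the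
expected utility: p(x) − r(x)·x ≥ p(γ) − r(γ)·x for all x, γ ∈ [0,ω]. -/
theorem stmt_1 (ω : ℝ) (hω : 0 < ω) (r : ℝ → ℝ)
    (hr : AntitoneOn r (Set.Icc 0 ω))
    (hint : IntervalIntegrable r volume 0 ω)
    (p : ℝ → ℝ)
    (hp : ∀ x ∈ Set.Icc (0:ℝ) ω, p x = p 0 + x * r x - ∫ t in (0:ℝ)..x, r t) :
    ∀ x ∈ Set.Icc (0:ℝ) ω, ∀ γ ∈ Set.Icc (0:ℝ) ω,
      p x - r x * x ≥ p γ - r γ * x := by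
  have hsubint : ∀ a b, a ∈ Set.Icc (0:ℝ) ω → b ∈ Set.Icc (0:ℝ) ω →
      IntervalIntegrable r volume a b := by
    intro a b ha hb
    exact hint.mono_set
      (Set.uIcc_subset_uIcc (Set.Icc_subset_uIcc ha) (Set.Icc_subset_uIcc hb))
  intro x hx γ hγ
  have h0 : (0:ℝ) ∈ Set.Icc (0:ℝ) ω := ⟨le_rfl, hω.le⟩
  rw [hp x hx, hp γ hγ]
  have hsub : (∫ t in (0:ℝ)..x, r t) - (∫ t in (0:ℝ)..γ, r t) = ∫ t in γ..x, r t :=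
    intervalIntegral.integral_interval_sub_left (hsubint 0 x h0 hx) (hsubint 0 γ h0 hγ)
  have key : (∫ t in γ..x, r t) ≤ (x - γ) * r γ := by
    rcases le_total γ x with h | h
    · have : (∫ t in γ..x, r t) ≤ ∫ t in γ..x, r γ := by
        apply intervalIntegral.integral_mono_on h (hsubint γ x hγ hx) intervalIntegrable_const
        intro t ht
        exact hr hγ ⟨le_trans hγ.1 ht.1, le_trans ht.2 hx.2⟩ ht.1
      simpa [mul_comm] using this
    · have : (∫ t in x..γ, r γ) ≤ ∫ t in x..γ, r t := by
        apply intervalIntegral.integral_mono_on h intervalIntegrable_const (hsubint x γ hx hγ)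
        intro t ht
        exact hr ⟨le_trans hx.1 ht.1, le_trans ht.2 hγ.2⟩ hγ ht.2
      rw [intervalIntegral.integral_symm x γ]
      simp only [intervalIntegral.integral_const, smul_eq_mul] at this ⊢
      linarith
  nlinarith [key, hsub]
end

section
/- If the incentive inequalities u(x,x) ≥ u(x,γ) hold for all x, γ (where u(x,x') = p(x') − r(x')·x), then the payment satisfies p(x) = p(0) + x·r(x) − ∫₀ˣ r(t) dt, i.e., the truthful utility û(x) = p(x) − x·r(x) equals û(0) − ∫₀ˣ r(t) dt. -/
open MeasureTheory intervalIntegral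

/-!
The truthful utility `U y = p y - r y * y` satisfies `r b * (b - a) ≤ U a - U b ≤ r a * (b - a)`
by the two incentive inequalities between `a` and `b`; adding them shows that `r` is antitone,
so `∫ t in a..b, r t` lies between the same bounds. Hence `G y = U y + ∫ t in 0..y, r t` moves by at most
`(r a - r b) * (b - a)` on `[a, b]`; summing over a partition of `[0, x]` into `n` equal pieces,
the jumps of `r` telescope and `|G x - G 0| ≤ (r 0 - r x) * x / n` for every `n`.
-/

open Set Finset

section Telescoping

variable {G f : ℝ → ℝ} {a b : ℝ}

theorem abs_sub_le_div_of_abs_sub_le_sub_mul_sub (hab : a ≤ b)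
    (hG : ∀ x ∈ Icc a b, ∀ y ∈ Icc a b, x ≤ y → |G y - G x| ≤ (f x - f y) * (y - x))
    {n : ℕ} (hn : 0 < n) : |G b - G a| ≤ (f a - f b) * (b - a) / n := by
  set h := (b - a) / n with h_def
  set t : ℕ → ℝ := fun i => a + i * h
  have hh : 0 ≤ h := div_nonneg (sub_nonneg.mpr hab) n.cast_nonneg
  have ht0 : t 0 = a := by simp [t]
  have htn : t n = b := by simp only [t, h_def]; field_simp; ring
  have ht_step (i : ℕ) : t (i + 1) = t i + h := by simp only [t]; push_cast; ring
  have ht_mem {i : ℕ} (hi : i ≤ n) : t i ∈ Icc a b := by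
    refine ⟨le_add_of_nonneg_right (by positivity), ?_⟩
    calc t i ≤ t n := by simp only [t]; gcongr
      _ = b := htn
  calc |G b - G a| = |∑ i ∈ range n, (G (t (i + 1)) - G (t i))| := by
        rw [sum_range_sub (fun i => G (t i)), ht0, htn]
    _ ≤ ∑ i ∈ range n, |G (t (i + 1)) - G (t i)| := abs_sum_le_sum_abs _ _
    _ ≤ ∑ i ∈ range n, (f (t i) - f (t (i + 1))) * h := by
        refine sum_le_sum fun i hi => ?_
        have hi : i + 1 ≤ n := mem_range.mp hi
        simpa only [ht_step i, add_sub_cancel_left] using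
          hG (t i) (ht_mem (by omega)) (t (i + 1)) (ht_mem hi) (by linarith [ht_step i])
    _ = (f a - f b) * (b - a) / n := by
        rw [← sum_mul, sum_range_sub' (fun i => f (t i)), ht0, htn, h_def, mul_div_assoc]

theorem eq_of_abs_sub_le_sub_mul_sub (hab : a ≤ b)
    (hG : ∀ x ∈ Icc a b, ∀ y ∈ Icc a b, x ≤ y → |G y - G x| ≤ (f x - f y) * (y - x)) :
    G b = G a := by
  have hle : |G b - G a| ≤ 0 := by
    refine ge_of_tendsto (tendsto_const_div_atTop_nhds_zero_nat ((f a - f b) * (b - a))) ?_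
    filter_upwards [Filter.eventually_gt_atTop 0] with n hn
    exact abs_sub_le_div_of_abs_sub_le_sub_mul_sub hab hG hn
  exact sub_eq_zero.mp (abs_nonpos_iff.mp hle)

end Telescoping

theorem AntitoneOn.integral_mem_Icc {r : ℝ → ℝ} {a b : ℝ} (hab : a ≤ b)
    (hr : AntitoneOn r (Icc a b)) :
    ∫ t in a..b, r t ∈ Icc (r b * (b - a)) (r a * (b - a)) := by
  have hri : IntervalIntegrable r volume a b := (uIcc_of_le hab ▸ hr).intervalIntegrable
  have ha : a ∈ Icc a b := left_mem_Icc.mpr hab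
  have hb : b ∈ Icc a b := right_mem_Icc.mpr hab
  constructor
  · simpa [mul_comm] using integral_mono_on hab intervalIntegrable_const hri
      fun t ht => hr ht hb ht.2
  · simpa [mul_comm] using integral_mono_on hab hri intervalIntegrable_const
      fun t ht => hr ha ht ht.1

section Incentive

variable {s : Set ℝ} {r p : ℝ → ℝ}

theorem antitoneOn_of_incentive (hic : ∀ x ∈ s, ∀ γ ∈ s, p x - r x * x ≥ p γ - r γ * x) :
    AntitoneOn r s := by
  intro a ha b hb hab
  have h₁ := hic a ha b hb
  have h₂ := hic b hb a ha
  rcases hab.eq_or_lt with rfl | hlt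
  · rfl
  · by_contra! h
    nlinarith

theorem incentive_utility_sub_mem_Icc
    (hic : ∀ x ∈ s, ∀ γ ∈ s, p x - r x * x ≥ p γ - r γ * x) {a b : ℝ} (ha : a ∈ s) (hb : b ∈ s) :
    (p a - r a * a) - (p b - r b * b) ∈ Icc (r b * (b - a)) (r a * (b - a)) := by
  have h₁ := hic a ha b hb
  have h₂ := hic b hb a ha
  constructor <;> linarith

theorem abs_incentive_utility_add_integral_sub_le {c d : ℝ}
    (hic : ∀ x ∈ Icc c d, ∀ γ ∈ Icc c d, p x - r x * x ≥ p γ - r γ * x)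
    {x y : ℝ} (hx : x ∈ Icc c d) (hy : y ∈ Icc c d) (hxy : x ≤ y) :
    |(p y - r y * y + ∫ t in c..y, r t) - (p x - r x * x + ∫ t in c..x, r t)| ≤
      (r x - r y) * (y - x) := by
  have hr := antitoneOn_of_incentive hic
  have hint {z : ℝ} (hz : z ∈ Icc c d) : IntervalIntegrable r volume c z :=
    (hr.mono (by rw [uIcc_of_le hz.1]; exact Icc_subset_Icc_right hz.2)).intervalIntegrable
  have hU := incentive_utility_sub_mem_Icc hic hx hy
  have hI := (hr.mono (Icc_subset_Icc hx.1 hy.2)).integral_mem_Icc hxy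
  rw [← integral_interval_sub_left (hint hy) (hint hx)] at hI
  calc _ = |((p x - r x * x) - (p y - r y * y)) - ((∫ t in c..y, r t) - ∫ t in c..x, r t)| := by
          rw [← abs_neg]; ring_nf
    _ ≤ r x * (y - x) - r y * (y - x) := abs_sub_le_of_le_of_le hU.1 hU.2 hI.1 hI.2
    _ = (r x - r y) * (y - x) := by ring

end Incentive

theorem stmt_2_general (ω : ℝ) (r : ℝ → ℝ)
    (p : ℝ → ℝ)
    (hic : ∀ x ∈ Set.Icc (0:ℝ) ω, ∀ γ ∈ Set.Icc (0:ℝ) ω,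
      p x - r x * x ≥ p γ - r γ * x) :
    ∀ x ∈ Set.Icc (0:ℝ) ω,
      p x = p 0 + x * r x - ∫ t in (0:ℝ)..x, r t := by
  intro x hx
  have hG := eq_of_abs_sub_le_sub_mul_sub (G := fun y => p y - r y * y + ∫ t in (0:ℝ)..y, r t)
    hx.1 fun a ha b hb hab =>
      abs_incentive_utility_add_integral_sub_le hic (Icc_subset_Icc_right hx.2 ha)
        (Icc_subset_Icc_right hx.2 hb) hab
  simp only [integral_same, mul_zero] at hG
  linarith

/-- If the incentive inequalities u(x,x) ≥ u(x,γ) hold for all x, γ ∈ [0,ω]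
(where u(x,x') = p(x') − r(x')·x and r is integrable, monotone nonincreasing),
then the payment satisfies p(x) = p(0) + x·r(x) − ∫₀ˣ r(t) dt. -/
theorem stmt_2 (ω : ℝ) (hω : 0 < ω) (r : ℝ → ℝ)
    (hr : AntitoneOn r (Set.Icc 0 ω))
    (hint : IntervalIntegrable r volume 0 ω)
    (p : ℝ → ℝ)
    (hic : ∀ x ∈ Set.Icc (0:ℝ) ω, ∀ γ ∈ Set.Icc (0:ℝ) ω,
      p x - r x * x ≥ p γ - r γ * x) :
    ∀ x ∈ Set.Icc (0:ℝ) ω,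
      p x = p 0 + x * r x - ∫ t in (0:ℝ)..x, r t :=
  stmt_2_general ω r p hic
end

section
/- Myerson virtual-cost identity: under the hypotheses, the expected payment equals the expected virtual cost times allocation plus the utility at zero minus the integral of r: ∫₀^ω p(x) f(x) dx = p(0) − ∫₀^ω r(x) dx + ∫₀^ω (x + F(x)/f(x))·r(x)·f(x) dx, where p(x) = p(0) + x·r(x) − ∫₀ˣ r(t) dt. -/
open MeasureTheory intervalIntegral

/-!
Writing `R x = ∫₀ˣ r` and `F x = ∫₀ˣ f`, the integrand on the left is `p 0 · f + x r f − R f`,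
and the one on the right is `x r f + r F`. Since `R` and `F` are absolutely continuous with
derivatives `r` and `f` almost everywhere, integration by parts gives
`∫₀^ω (R f + r F) = R ω · F ω = ∫₀^ω r`, which is exactly the difference of the two sides.
-/

theorem intervalIntegral.integral_primitive_mul_add_mul_primitive {r g : ℝ → ℝ} {a b : ℝ}
    (hr : IntervalIntegrable r volume a b) (hg : IntervalIntegrable g volume a b) :
    ∫ x in a..b, ((∫ t in a..x, r t) * g x + r x * ∫ t in a..x, g t)
      = (∫ x in a..b, r x) * ∫ x in a..b, g x := by
  have hR := hr.absolutelyContinuousOnInterval_intervalIntegral (c := a) Set.left_mem_uIcc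
  have hG := hg.absolutelyContinuousOnInterval_intervalIntegral (c := a) Set.left_mem_uIcc
  have hparts := hR.integral_deriv_mul_eq_sub hG
  simp only [integral_same, mul_zero, sub_zero] at hparts
  rw [← hparts]
  refine integral_congr_ae ?_
  filter_upwards [hr.ae_hasDerivAt_integral, hg.ae_hasDerivAt_integral] with x hrx hgx hx
  have hx' : x ∈ Set.uIcc a b := Set.uIoc_subset_uIcc hx
  rw [(hrx hx' a Set.left_mem_uIcc).deriv, (hgx hx' a Set.left_mem_uIcc).deriv]
  ring

theorem stmt_5_general (ω : ℝ) (hω : 0 < ω) (f r : ℝ → ℝ)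
    (hfpos : ∀ x ∈ Set.Icc (0:ℝ) ω, 0 < f x)
    (hfcont : ContinuousOn f (Set.Icc 0 ω))
    (hfone : (∫ s in (0:ℝ)..ω, f s) = 1)
    (F : ℝ → ℝ) (hF : ∀ t ∈ Set.Icc (0:ℝ) ω, F t = ∫ s in (0:ℝ)..t, f s)
    (hrint : IntervalIntegrable r volume 0 ω)
    (p : ℝ → ℝ)
    (hp : ∀ x ∈ Set.Icc (0:ℝ) ω, p x = p 0 + x * r x - ∫ t in (0:ℝ)..x, r t) :
    (∫ x in (0:ℝ)..ω, p x * f x)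
      = p 0 - (∫ x in (0:ℝ)..ω, r x)
        + ∫ x in (0:ℝ)..ω, (x + F x / f x) * r x * f x := by
  set R : ℝ → ℝ := fun x => ∫ t in (0:ℝ)..x, r t
  set G : ℝ → ℝ := fun x => ∫ t in (0:ℝ)..x, f t
  have huIcc : Set.uIcc (0:ℝ) ω = Set.Icc 0 ω := Set.uIcc_of_le hω.le
  have hfcont' : ContinuousOn f (Set.uIcc 0 ω) := huIcc ▸ hfcont
  have hfint : IntervalIntegrable f volume 0 ω := hfcont'.intervalIntegrable
  have hpf : IntervalIntegrable (fun x => p 0 * f x) volume 0 ω := hfint.const_mul _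
  have hxrf : IntervalIntegrable (fun x => x * r x * f x) volume 0 ω := by
    have hxf : ContinuousOn (fun x => x * f x) (Set.uIcc 0 ω) := continuousOn_id.mul hfcont'
    simpa only [mul_assoc, mul_left_comm _ (r _)] using hrint.mul_continuousOn hxf
  have hRf : IntervalIntegrable (fun x => R x * f x) volume 0 ω :=
    hfint.continuousOn_mul (continuousOn_primitive_interval' hrint Set.left_mem_uIcc)
  have hrG : IntervalIntegrable (fun x => r x * G x) volume 0 ω :=
    hrint.mul_continuousOn (continuousOn_primitive_interval' hfint Set.left_mem_uIcc)
  have hparts :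
      ∫ x in (0:ℝ)..ω, r x = (∫ x in (0:ℝ)..ω, R x * f x) + ∫ x in (0:ℝ)..ω, r x * G x := by
    rw [← integral_add hRf hrG, integral_primitive_mul_add_mul_primitive hrint hfint, hfone,
      mul_one]
  have hlhs : ∫ x in (0:ℝ)..ω, p x * f x
      = ∫ x in (0:ℝ)..ω, (p 0 * f x + x * r x * f x - R x * f x) := by
    refine integral_congr fun x hx => ?_
    rw [hp x (huIcc ▸ hx)]
    ring
  have hrhs : ∫ x in (0:ℝ)..ω, (x + F x / f x) * r x * f x
      = ∫ x in (0:ℝ)..ω, (x * r x * f x + r x * G x) := by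
    refine integral_congr fun x hx => ?_
    have hfx := (hfpos x (huIcc ▸ hx)).ne'
    have hFx : F x = G x := hF x (huIcc ▸ hx)
    rw [hFx]
    field_simp
  rw [hlhs, hrhs, integral_sub (hpf.add hxrf) hRf, integral_add hpf hxrf, integral_add hxrf hrG,
    intervalIntegral.integral_const_mul, hfone, hparts]
  ring

/-- Myerson virtual-cost identity:
∫₀^ω p(x) f(x) dx = p(0) − ∫₀^ω r(x) dx + ∫₀^ω (x + F(x)/f(x))·r(x)·f(x) dx,
where p(x) = p(0) + x·r(x) − ∫₀ˣ r(t) dt, f is a strictly positive continuous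
density on [0,ω] with CDF F, and r is nonnegative, nonincreasing, integrable. -/
theorem stmt_5 (ω : ℝ) (hω : 0 < ω) (f r : ℝ → ℝ)
    (hfpos : ∀ x ∈ Set.Icc (0:ℝ) ω, 0 < f x)
    (hfcont : ContinuousOn f (Set.Icc 0 ω))
    (hfone : (∫ s in (0:ℝ)..ω, f s) = 1)
    (F : ℝ → ℝ) (hF : ∀ t ∈ Set.Icc (0:ℝ) ω, F t = ∫ s in (0:ℝ)..t, f s)
    (hrpos : ∀ x ∈ Set.Icc (0:ℝ) ω, 0 ≤ r x)
    (hr : AntitoneOn r (Set.Icc 0 ω))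
    (hrint : IntervalIntegrable r volume 0 ω)
    (p : ℝ → ℝ)
    (hp : ∀ x ∈ Set.Icc (0:ℝ) ω, p x = p 0 + x * r x - ∫ t in (0:ℝ)..x, r t) :
    (∫ x in (0:ℝ)..ω, p x * f x)
      = p 0 - (∫ x in (0:ℝ)..ω, r x)
        + ∫ x in (0:ℝ)..ω, (x + F x / f x) * r x * f x :=
  stmt_5_general ω hω f r hfpos hfcont hfone F hF hrint p hp
end

section
/- Monotonicity of the profit-optimal allocation: define R*(t) as the n-value of the maximizer (with minimal n among maximizers) of g(η, t) = V(η) − C(η) − n(η)·λ(t) over a finite set E, where λ is strictly increasing. Then R* : ℝ≥0 → ℕ is monotone nonincreasing. -/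
open NNReal

/-- Monotonicity of the profit-optimal allocation: with λ strictly increasing,
the minimal n-value among maximizers of g(·,t) = V − C − n·λ(t) over a finite
nonempty E is a monotone nonincreasing function of t. -/
theorem stmt_10 (E : Type) [Finite E] [Nonempty E] (V C : E → ℝ) (n : E → ℕ)
    (lam : ℝ≥0 → ℝ) (hlam : StrictMono lam)
    (g : E → ℝ≥0 → ℝ)
    (hg : ∀ η t, g η t = V η - C η - (n η : ℝ) * lam t)
    (R : ℝ≥0 → ℕ)
    (hR : ∀ t, IsLeast {m : ℕ | ∃ η, n η = m ∧ ∀ η', g η t ≥ g η' t} (R t)) :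
    Antitone R := by
  intro s t hst
  rcases eq_or_lt_of_le hst with rfl | h
  · exact le_refl _
  obtain ⟨⟨ηs, hns, hmaxs⟩, _⟩ := hR s
  obtain ⟨⟨ηt, hnt, hmaxt⟩, _⟩ := hR t
  have h1 := hmaxs ηt
  have h2 := hmaxt ηs
  rw [hg, hg] at h1 h2
  have hl := hlam h
  have : (n ηt : ℝ) ≤ (n ηs : ℝ) := by nlinarith
  rw [← hns, ← hnt]
  exact_mod_cast this
end
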